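/- Let X be a minimal G-flow. Then π_X : S_G(X) → X is the universal highly proximal extension of X: for every highly proximal G-map φ: Y → X of minimal flows, there exists a continuous G-map ψ: S_G(X) → Y with π_X = φ ∘ ψ. -/

import Mathlib

open Pointwise

/-- A near filter on the open sets of a `G`-flow `X`: a family of nonempty open
subsets such that finite intersections of `U`-thickenings of its members are
nonempty, for every symmetric open neighborhood `U` of the identity. -/
def IsNearFilter (G : Type*) {X : Type*} [Group G] [TopologicalSpace G]
    [TopologicalSpace X] [MulAction G X] (F : Set (Set X)) : Prop :=
  (∀ A ∈ F, IsOpen A ∧ A.Nonempty) ∧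
  ∀ s : Finset (Set X), s.Nonempty → ↑s ⊆ F →
    ∀ U : Set G, IsOpen U → (1 : G) ∈ U → U⁻¹ = U →
      (⋂ A ∈ s, U • A).Nonempty

/-- A near ultrafilter is a maximal near filter. -/
def IsNearUltrafilter (G : Type*) {X : Type*} [Group G] [TopologicalSpace G]
    [TopologicalSpace X] [MulAction G X] (F : Set (Set X)) : Prop :=
  IsNearFilter G F ∧ ∀ F' : Set (Set X), IsNearFilter G F' → F ⊆ F' → F' ⊆ F

/-- The space `S_G(X)` of near ultrafilters on `X`. -/
def NearUltra (G X : Type*) [Group G] [TopologicalSpace G]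
    [TopologicalSpace X] [MulAction G X] : Type _ :=
  {F : Set (Set X) // IsNearUltrafilter G F}

/-- The topology on `S_G(X)` generated by the sets `N_A = {p | A ∉ p}`
for `A` a nonempty open subset of `X`. -/
def nearTopology (G X : Type*) [Group G] [TopologicalSpace G]
    [TopologicalSpace X] [MulAction G X] : TopologicalSpace (NearUltra G X) :=
  TopologicalSpace.generateFrom
    {N | ∃ A : Set X, IsOpen A ∧ A.Nonempty ∧ N = {p : NearUltra G X | A ∉ p.1}}

/-!
For a near ultrafilter `p`, the thickenings `⋂ A ∈ S, U • A` (with `S ⊆ p` finite and `U` an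
identity neighbourhood) form a filter base on `X`. Pulled back along `φ`, it has a cluster point
in the compact space `Y`, and high proximality makes this cluster point unique: if `y₁ ∈ V` and
`y₂ ∉ closure (U • V)`, the points whose fibre lies in `V` form a member of `p`, which keeps `y₂`
away. Taking `ψ p` to be this point, `φ (ψ p)` is a cluster point of the base and hence `π p`,
equivariance follows from uniqueness, and continuity from the fact that `U • A ∈ q` for all `q`
near `p` as soon as `A ∈ p`, since `q` must contain `U • A` or the complement of its closure.
-/

open Filter Topology

theorem preimage_smul_subset_smul_preimage {G X Y : Type*} [Group G] [MulAction G X]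
    [MulAction G Y] {φ : Y → X} (hφ : ∀ (g : G) (y : Y), φ (g • y) = g • φ y)
    (U : Set G) (A : Set X) : φ ⁻¹' (U • A) ⊆ U • φ ⁻¹' A := by
  rintro y ⟨u, hu, a, ha, hy⟩
  refine ⟨u, hu, u⁻¹ • y, ?_, smul_inv_smul u y⟩
  simp only at hy
  simpa [hφ, ← hy] using ha

section TopologicalGroup

variable {G : Type*} [Group G] [TopologicalSpace G] [IsTopologicalGroup G]

theorem exists_isOpen_inv_eq_mul_subset {U : Set G} (hU : U ∈ 𝓝 (1 : G)) :
    ∃ V : Set G, IsOpen V ∧ (1 : G) ∈ V ∧ V⁻¹ = V ∧ V * V ⊆ U := by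
  obtain ⟨V, hVo, hV1, hVU⟩ := exists_open_nhds_one_mul_subset hU
  refine ⟨V ∩ V⁻¹, hVo.inter hVo.inv, ⟨hV1, by simpa using hV1⟩,
    by rw [Set.inter_inv, inv_inv, Set.inter_comm], ?_⟩
  exact (Set.mul_subset_mul Set.inter_subset_left Set.inter_subset_left).trans hVU

variable {X : Type*} [TopologicalSpace X] [MulAction G X] [ContinuousSMul G X]

theorem exists_isOpen_mem_nhds_one_notMem_closure_smul [T2Space X] {x y : X} (h : x ≠ y) :
    ∃ V : Set X, IsOpen V ∧ x ∈ V ∧ ∃ U ∈ 𝓝 (1 : G), y ∉ closure (U • V) := by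
  obtain ⟨V, W, hV, hW, hxV, hyW, hVW⟩ := t2_separation h
  have hcont : Continuous fun q : G × X => q.1⁻¹ • q.2 := by fun_prop
  have hmem : (fun q : G × X => q.1⁻¹ • q.2) ⁻¹' W ∈ 𝓝 ((1 : G), y) :=
    hcont.continuousAt.preimage_mem_nhds (by simpa using hW.mem_nhds hyW)
  obtain ⟨U, hU, W', hW', hsub⟩ := mem_nhds_prod_iff.1 hmem
  refine ⟨V, hV, hxV, U, hU, fun hy => ?_⟩
  obtain ⟨_, hzW', u, hu, v, hv, rfl⟩ := mem_closure_iff_nhds.1 hy W' hW'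
  exact Set.disjoint_left.1 hVW hv (by simpa using hsub (Set.mk_mem_prod hu hzW'))

end TopologicalGroup

section NearFilter

variable (G : Type*) {X : Type*} [Group G] [TopologicalSpace G] [MulAction G X]

theorem isBasis_nearFilter (F : Set (Set X)) :
    IsBasis (fun i : Finset (Set X) × Set G => ↑i.1 ⊆ F ∧ i.2 ∈ 𝓝 (1 : G))
      (fun i => ⋂ A ∈ i.1, i.2 • A) where
  nonempty := ⟨(∅, Set.univ), by simp⟩
  inter {i j} hi hj := by
    refine ⟨(i.1 ∪ j.1, i.2 ∩ j.2), ⟨?_, inter_mem hi.2 hj.2⟩, ?_⟩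
    · simpa using And.intro hi.1 hj.1
    · refine Set.subset_inter ?_ ?_ <;>
      refine Set.iInter₂_mono' fun A hA => ⟨A, by simp [hA], ?_⟩
      exacts [Set.smul_subset_smul_right Set.inter_subset_left,
        Set.smul_subset_smul_right Set.inter_subset_right]

/-- The filter generated by the thickenings `⋂ A ∈ S, U • A` of finite subfamilies `S ⊆ F`
by identity neighbourhoods `U`. -/
def nearFilter (F : Set (Set X)) : Filter X :=
  (isBasis_nearFilter G F).filter

variable {G} {F : Set (Set X)}

theorem hasBasis_nearFilter (F : Set (Set X)) :
    (nearFilter G F).HasBasis (fun i : Finset (Set X) × Set G => ↑i.1 ⊆ F ∧ i.2 ∈ 𝓝 (1 : G))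
      (fun i => ⋂ A ∈ i.1, i.2 • A) :=
  (isBasis_nearFilter G F).hasBasis

theorem smul_mem_nearFilter {A : Set X} (hA : A ∈ F) {U : Set G} (hU : U ∈ 𝓝 (1 : G)) :
    U • A ∈ nearFilter G F :=
  (hasBasis_nearFilter F).mem_of_superset (i := ({A}, U)) ⟨by simpa using hA, hU⟩ (by simp)

theorem map_smul_nearFilter_le [ContinuousMul G] (g : G) (F : Set (Set X)) :
    map (g • ·) (nearFilter G F) ≤ nearFilter G {A | g⁻¹ • A ∈ F} := by
  refine (hasBasis_nearFilter _).ge_iff.2 fun ⟨S, U⟩ ⟨hS, hU⟩ => ?_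
  have hU' : (fun u => g * u * g⁻¹) ⁻¹' U ∈ 𝓝 (1 : G) :=
    (by fun_prop : Continuous fun u : G => g * u * g⁻¹).continuousAt.preimage_mem_nhds
      (by simpa using hU)
  refine mem_map.2 (mem_of_superset
    ((biInter_finset_mem S).2 fun A hA => smul_mem_nearFilter (show g⁻¹ • A ∈ F from hS hA) hU')
    fun x hx => ?_)
  refine Set.mem_iInter₂.2 fun A hA => ?_
  obtain ⟨u, hu, _, ⟨a, ha, rfl⟩, rfl⟩ := Set.mem_iInter₂.1 hx A hA
  exact ⟨g * u * g⁻¹, hu, a, ha, by simp [mul_smul]⟩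

theorem ClusterPt.smul_comap_nearFilter [ContinuousMul G] {Y : Type*} [TopologicalSpace Y]
    [MulAction G Y] [ContinuousConstSMul G Y] {φ : Y → X}
    (hφ : ∀ (g : G) (y : Y), φ (g • y) = g • φ y) (g : G) {y : Y}
    (hy : ClusterPt y (comap φ (nearFilter G F))) :
    ClusterPt (g • y) (comap φ (nearFilter G {A | g⁻¹ • A ∈ F})) := by
  refine hy.map (continuous_const_smul g).continuousAt (tendsto_comap_iff.2 ?_)
  rw [show φ ∘ (g • ·) = (g • ·) ∘ φ from funext (hφ g)]
  exact (tendsto_map.comp tendsto_comap).mono_right (map_smul_nearFilter_le g F)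

variable [TopologicalSpace X]

theorem IsNearFilter.nearFilter_neBot [IsTopologicalGroup G] [Nonempty X]
    (hF : IsNearFilter G F) : (nearFilter G F).NeBot := by
  refine (hasBasis_nearFilter F).neBot_iff.2 fun {i} hi => ?_
  rcases i.1.eq_empty_or_nonempty with hS | hS
  · simp [hS]
  obtain ⟨V, hVo, hV1, hVs, hVU⟩ := exists_isOpen_inv_eq_mul_subset hi.2
  refine (hF.2 i.1 hS hi.1 V hVo hV1 hVs).mono (Set.iInter₂_mono fun A _ => ?_)
  exact Set.smul_subset_smul_right ((Set.subset_mul_left V hV1).trans hVU)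

theorem IsNearFilter.exists_isOpen_mem_nearFilter_subset [ContinuousConstSMul G X]
    (hF : IsNearFilter G F) {T : Set X} (hT : T ∈ nearFilter G F) :
    ∃ T' ∈ nearFilter G F, IsOpen T' ∧ T' ⊆ T := by
  obtain ⟨i, hi, hsub⟩ := (hasBasis_nearFilter F).mem_iff.1 hT
  exact ⟨_, (hasBasis_nearFilter F).mem_of_mem hi,
    isOpen_biInter_finset fun A hA => (hF.1 A (hi.1 hA)).1.smul_left, hsub⟩

theorem IsNearFilter.inter_nonempty [IsTopologicalGroup G] (hF : IsNearFilter G F)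
    {B T : Set X} (hB : B ∈ F) (hT : T ∈ nearFilter G F) : (B ∩ T).Nonempty := by
  classical
  obtain ⟨⟨S, U⟩, ⟨hS, hU⟩, hsub⟩ := (hasBasis_nearFilter F).mem_iff.1 hT
  obtain ⟨V, hVo, hV1, hVs, hVU⟩ := exists_isOpen_inv_eq_mul_subset hU
  obtain ⟨x, hx⟩ := hF.2 (insert B S) (Finset.insert_nonempty _ _)
    (by simpa [Set.insert_subset_iff] using And.intro hB hS) V hVo hV1 hVs
  rw [Finset.set_biInter_insert] at hx
  obtain ⟨v, hv, b, hb, rfl⟩ := hx.1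
  refine ⟨b, hb, hsub (Set.mem_iInter₂.2 fun A hA => ?_)⟩
  obtain ⟨w, hw, a, ha, hwa⟩ := Set.mem_iInter₂.1 hx.2 A hA
  have hv' : v⁻¹ ∈ V := hVs ▸ Set.inv_mem_inv.2 hv
  refine ⟨v⁻¹ * w, hVU (Set.mul_mem_mul hv' hw), a, ha, ?_⟩
  simp only at hwa ⊢
  rw [mul_smul, hwa, inv_smul_smul]

theorem IsNearUltrafilter.mem_of_forall_inter_nonempty (hF : IsNearUltrafilter G F)
    {A₀ : Set X} (hA₀ : IsOpen A₀) (h : ∀ T ∈ nearFilter G F, (A₀ ∩ T).Nonempty) :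
    A₀ ∈ F := by
  classical
  refine hF.2 (insert A₀ F) ⟨?_, ?_⟩ (Set.subset_insert _ _) (Set.mem_insert _ _)
  · rintro A (rfl | hA)
    exacts [⟨hA₀, by simpa using h Set.univ univ_mem⟩, hF.1.1 A hA]
  · intro s _ hs U hUo hU1 _
    have hsF : ↑(s.erase A₀) ⊆ F := fun A hA =>
      (hs (Finset.mem_of_mem_erase hA)).resolve_left (Finset.ne_of_mem_erase hA)
    obtain ⟨x, hx₀, hx⟩ :=
      h _ ((hasBasis_nearFilter F).mem_of_mem (i := (s.erase A₀, U)) ⟨hsF, hUo.mem_nhds hU1⟩)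
    refine ⟨x, Set.mem_iInter₂.2 fun A hA => ?_⟩
    by_cases hAA₀ : A = A₀
    · exact hAA₀ ▸ ⟨1, hU1, x, hx₀, one_smul G x⟩
    · exact Set.mem_iInter₂.1 hx A (Finset.mem_erase.2 ⟨hAA₀, hA⟩)

theorem IsNearUltrafilter.mem_or_compl_closure_mem [IsTopologicalGroup G]
    [ContinuousConstSMul G X] [Nonempty X] (hF : IsNearUltrafilter G F) {O : Set X}
    (hO : IsOpen O) : O ∈ F ∨ (closure O)ᶜ ∈ F := by
  have hdisj : ∀ {B : Set X}, IsOpen B → B ∉ F → ∃ T ∈ nearFilter G F, B ∩ T = ∅ := by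
    intro B hB hBF
    by_contra! h
    exact hBF (hF.mem_of_forall_inter_nonempty hB h)
  by_contra! h
  obtain ⟨T₁, hT₁, hOT₁⟩ := hdisj hO h.1
  obtain ⟨T₂, hT₂, hOT₂⟩ := hdisj isClosed_closure.isOpen_compl h.2
  have := hF.1.nearFilter_neBot
  obtain ⟨T, hT, hTo, hTsub⟩ := hF.1.exists_isOpen_mem_nearFilter_subset (inter_mem hT₁ hT₂)
  obtain ⟨x, hx⟩ := nonempty_of_mem hT
  have hxO : x ∈ closure O := by
    by_contra hxO
    exact Set.eq_empty_iff_forall_notMem.1 hOT₂ x ⟨hxO, (hTsub hx).2⟩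
  obtain ⟨z, hzT, hzO⟩ := mem_closure_iff_nhds.1 hxO T (hTo.mem_nhds hx)
  exact Set.eq_empty_iff_forall_notMem.1 hOT₁ z ⟨hzO, (hTsub hzT).1⟩

theorem eq_of_clusterPt_nearFilter [IsTopologicalGroup G] [ContinuousSMul G X] [T2Space X]
    {x x₀ : X} (hx : ClusterPt x (nearFilter G F)) (hx₀ : ∀ V, IsOpen V → x₀ ∈ V → V ∈ F) :
    x = x₀ := by
  by_contra h
  obtain ⟨V, hV, hx₀V, U, hU, hxU⟩ :=
    exists_isOpen_mem_nhds_one_notMem_closure_smul (G := G) (Ne.symm h)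
  exact hxU (hx.mem_closure_of_mem _ (smul_mem_nearFilter (hx₀ V hV hx₀V) hU))

end NearFilter

namespace NearUltra

variable {G X : Type*} [Group G] [TopologicalSpace G] [TopologicalSpace X] [MulAction G X]

theorem isOpen_setOf_notMem {B : Set X} (hB : IsOpen B) :
    IsOpen[nearTopology G X] {q : NearUltra G X | B ∉ q.1} := by
  rcases B.eq_empty_or_nonempty with rfl | hne
  · convert @isOpen_univ _ (nearTopology G X)
    exact Set.eq_univ_of_forall fun q hq => Set.not_nonempty_empty (q.2.1.1 ∅ hq).2
  · exact TopologicalSpace.isOpen_generateFrom_of_mem ⟨B, hB, hne, rfl⟩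

theorem setOf_smul_mem_mem_nhds [IsTopologicalGroup G] [ContinuousConstSMul G X]
    (p : NearUltra G X) {A : Set X} (hA : A ∈ p.1) {U : Set G} (hU : U ∈ 𝓝 (1 : G)) :
    {q : NearUltra G X | U • A ∈ q.1} ∈ @nhds _ (nearTopology G X) p := by
  have : Nonempty X := (p.2.1.1 A hA).2.nonempty
  have hUA : IsOpen (U • A) := (p.2.1.1 A hA).1.smul_left
  refine mem_of_superset (@IsOpen.mem_nhds _ (nearTopology G X) _ _
    (isOpen_setOf_notMem isClosed_closure.isOpen_compl) fun hp => ?_)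
    fun q hq => (q.2.mem_or_compl_closure_mem hUA).resolve_right hq
  obtain ⟨x, hx, hxUA⟩ := p.2.1.inter_nonempty hp (smul_mem_nearFilter hA hU)
  exact hx (subset_closure hxUA)

end NearUltra

section Extension

variable {G X Y : Type*} [Group G] [TopologicalSpace G] [TopologicalSpace X] [MulAction G X]
  [TopologicalSpace Y] {φ : Y → X} {F : Set (Set X)}

/-- `(φ '' Vᶜ)ᶜ` is the set of points whose whole fibre lies in `V`. -/
theorem IsNearUltrafilter.compl_image_compl_mem [ContinuousConstSMul G X] [CompactSpace Y]
    [T2Space X] (hF : IsNearUltrafilter G F) (hcont : Continuous φ) (hsurj : φ.Surjective)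
    (hhp : ∀ W : Set Y, IsOpen W → W.Nonempty → ∃ x : X, φ ⁻¹' {x} ⊆ W) {y : Y}
    (hy : ClusterPt y (comap φ (nearFilter G F))) {V : Set Y} (hV : IsOpen V) (hyV : y ∈ V) :
    (φ '' Vᶜ)ᶜ ∈ F := by
  refine hF.mem_of_forall_inter_nonempty
    (hV.isClosed_compl.isCompact.image hcont).isClosed.isOpen_compl fun T hT => ?_
  obtain ⟨T', hT', hT'o, hT'T⟩ := hF.1.exists_isOpen_mem_nearFilter_subset hT
  obtain ⟨x, hx⟩ := hhp (V ∩ φ ⁻¹' T') (hV.inter (hT'o.preimage hcont))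
    (mem_closure_iff_nhds.1 (hy.mem_closure_of_mem _ (preimage_mem_comap hT')) V
      (hV.mem_nhds hyV))
  obtain ⟨z, rfl⟩ := hsurj x
  refine ⟨φ z, ?_, hT'T (hx rfl).2⟩
  rintro ⟨w, hwV, hw⟩
  exact hwV (hx hw).1

theorem IsNearUltrafilter.eq_of_clusterPt_comap [IsTopologicalGroup G] [ContinuousConstSMul G X]
    [MulAction G Y] [ContinuousSMul G Y] [CompactSpace Y] [T2Space Y] [T2Space X]
    (hF : IsNearUltrafilter G F) (hcont : Continuous φ)
    (hφ : ∀ (g : G) (y : Y), φ (g • y) = g • φ y) (hsurj : φ.Surjective)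
    (hhp : ∀ W : Set Y, IsOpen W → W.Nonempty → ∃ x : X, φ ⁻¹' {x} ⊆ W) {y₁ y₂ : Y}
    (hy₁ : ClusterPt y₁ (comap φ (nearFilter G F)))
    (hy₂ : ClusterPt y₂ (comap φ (nearFilter G F))) : y₁ = y₂ := by
  by_contra h
  obtain ⟨V, hV, hy₁V, U, hU, hy₂U⟩ := exists_isOpen_mem_nhds_one_notMem_closure_smul (G := G) h
  have hA₀ := hF.compl_image_compl_mem hcont hsurj hhp hy₁ hV hy₁V
  refine hy₂U (closure_mono ?_
    (hy₂.mem_closure_of_mem _ (preimage_mem_comap (smul_mem_nearFilter hA₀ hU))))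
  refine (preimage_smul_subset_smul_preimage hφ U _).trans (Set.smul_subset_smul_left ?_)
  intro z hz
  by_contra hzV
  exact hz ⟨z, hzV, rfl⟩

theorem continuous_of_clusterPt_comap_nearFilter [IsTopologicalGroup G]
    [ContinuousConstSMul G X] [RegularSpace Y] {ψ : NearUltra G X → Y}
    (hψ : ∀ p, ClusterPt (ψ p) (comap φ (nearFilter G p.1)))
    (hlim : ∀ p, comap φ (nearFilter G p.1) ≤ 𝓝 (ψ p)) :
    Continuous[nearTopology G X, _] ψ := by
  let := nearTopology G X
  refine continuous_iff_continuousAt.2 fun p =>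
    (closed_nhds_basis (ψ p)).tendsto_right_iff.2 fun C ⟨hC, hCc⟩ => ?_
  obtain ⟨T, hT, hTC⟩ := mem_comap.1 (hlim p hC)
  obtain ⟨⟨S, U⟩, ⟨hS, hU⟩, hST⟩ := (hasBasis_nearFilter p.1).mem_iff.1 hT
  obtain ⟨U₁, hU₁o, hU₁1, hU₁U⟩ := exists_open_nhds_one_mul_subset hU
  have hnear : ∀ᶠ q in 𝓝 p, ∀ A ∈ S, U₁ • A ∈ q.1 := (eventually_all_finset S).2 fun A hA =>
    NearUltra.setOf_smul_mem_mem_nhds p (hS hA) (hU₁o.mem_nhds hU₁1)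
  refine hnear.mono fun q hq => hCc.closure_subset_iff.2 hTC
    (closure_mono (Set.preimage_mono hST) ((hψ q).mem_closure_of_mem _ ?_))
  refine preimage_mem_comap ((biInter_finset_mem S).2 fun A hA => mem_of_superset
    (smul_mem_nearFilter (hq A hA) (hU₁o.mem_nhds hU₁1)) ?_)
  rw [smul_smul]
  exact Set.smul_subset_smul_right hU₁U

end Extension

theorem nearUltra_universal_highlyProximal_general
    {G X Y : Type*} [Group G] [TopologicalSpace G] [IsTopologicalGroup G]
    [TopologicalSpace X] [T2Space X]
    [MulAction G X] [ContinuousSMul G X]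
    [TopologicalSpace Y] [CompactSpace Y] [T2Space Y]
    [MulAction G Y] [ContinuousSMul G Y]
    (hact : ∀ (g : G) (p : NearUltra G X),
      IsNearUltrafilter G {A : Set X | g⁻¹ • A ∈ p.1})
    (π : NearUltra G X → X)
    (hπ : ∀ p : NearUltra G X, ∀ A : Set X, IsOpen A → π p ∈ A → A ∈ p.1)
    (φ : Y → X) (hcont : Continuous φ)
    (hequiv : ∀ (g : G) (y : Y), φ (g • y) = g • φ y)
    (hsurj : Function.Surjective φ)
    (hhp : ∀ W : Set Y, IsOpen W → W.Nonempty → ∃ x : X, φ ⁻¹' {x} ⊆ W) :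
    ∃ ψ : NearUltra G X → Y,
      @Continuous (NearUltra G X) Y (nearTopology G X) _ ψ ∧
      (∀ (g : G) (p : NearUltra G X),
        ψ ⟨{A : Set X | g⁻¹ • A ∈ p.1}, hact g p⟩ = g • ψ p) ∧
      (∀ p : NearUltra G X, φ (ψ p) = π p) := by
  have hclu : ∀ p : NearUltra G X, ∃ y, ClusterPt y (comap φ (nearFilter G p.1)) := fun p =>
    have : Nonempty X := ⟨π p⟩
    have := p.2.1.nearFilter_neBot.comap_of_surj hsurj
    exists_clusterPt_of_compactSpace _
  choose ψ hψ using hclu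
  have huniq : ∀ p y, ClusterPt y (comap φ (nearFilter G p.1)) → y = ψ p := fun p _ hy =>
    p.2.eq_of_clusterPt_comap hcont hequiv hsurj hhp hy (hψ p)
  refine ⟨ψ, continuous_of_clusterPt_comap_nearFilter hψ
      fun p => le_nhds_of_unique_clusterPt (huniq p), fun g p => ?_, fun p => ?_⟩
  · exact (huniq ⟨_, hact g p⟩ _ ((hψ p).smul_comap_nearFilter hequiv g)).symm
  · exact eq_of_clusterPt_nearFilter ((hψ p).map hcont.continuousAt tendsto_comap) (hπ p)

/-- The canonical map from the space of near ultrafilters is the universal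
highly proximal extension: every highly proximal extension of X factors it. -/
theorem nearUltra_universal_highlyProximal
    {G X Y : Type*} [Group G] [TopologicalSpace G] [IsTopologicalGroup G]
    [TopologicalSpace X] [CompactSpace X] [T2Space X]
    [MulAction G X] [ContinuousSMul G X]
    [TopologicalSpace Y] [CompactSpace Y] [T2Space Y]
    [MulAction G Y] [ContinuousSMul G Y]
    (hminX : ∀ x : X, Dense (MulAction.orbit G x))
    (hminY : ∀ y : Y, Dense (MulAction.orbit G y))
    (hact : ∀ (g : G) (p : NearUltra G X),
      IsNearUltrafilter G {A : Set X | g⁻¹ • A ∈ p.1})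
    (π : NearUltra G X → X)
    (hπ : ∀ p : NearUltra G X, ∀ A : Set X, IsOpen A → π p ∈ A → A ∈ p.1)
    (φ : Y → X) (hcont : Continuous φ)
    (hequiv : ∀ (g : G) (y : Y), φ (g • y) = g • φ y)
    (hsurj : Function.Surjective φ)
    (hhp : ∀ W : Set Y, IsOpen W → W.Nonempty → ∃ x : X, φ ⁻¹' {x} ⊆ W) :
    ∃ ψ : NearUltra G X → Y,
      @Continuous (NearUltra G X) Y (nearTopology G X) _ ψ ∧
      (∀ (g : G) (p : NearUltra G X),
        ψ ⟨{A : Set X | g⁻¹ • A ∈ p.1}, hact g p⟩ = g • ψ p) ∧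
      (∀ p : NearUltra G X, φ (ψ p) = π p) :=
  nearUltra_universal_highlyProximal_general hact π hπ φ hcont hequiv hsurj hhp
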